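/- arXiv:2307.05436 — 4 statements merged into one kernel-verified Lean document; each statement's English description precedes it below -/
import Mathlib

section
/- Let M be a compact manifold and G a Lie group acting smoothly on M. Let X, Y ∈ 𝔤 and k ≥ 1 be such that Z := ad(X)^k Y is centralized by X (i.e. [X,Z] = 0). If the vector field induced by Y on M vanishes at some point, then the vector field induced by Z vanishes at some point. -/
/-!
Let `x₀` be a zero of `v Y` and follow its orbit `t ↦ φ X t x₀`. Since `ad(X)^(k+1) Y = 0`, the
series `Ad(exp tX) Y = ∑ tⁿ/n! ad(X)ⁿ Y` stops at `n = k`, so equivariance turns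
`0 = d(φ X t)(v Y x₀)` into `∑_{n ≤ k} tⁿ/n! · v (ad(X)ⁿ Y) (φ X t x₀) = 0`. The fields are bounded
on the compact `M`, so dividing by `tᵏ` shows that `v Z` tends to `0` along the orbit; the orbit
has a limit point, which is a zero of `v Z`.
-/

noncomputable section

open Manifold Set

variable {E : Type*} [NormedAddCommGroup E] [NormedSpace ℝ E] [FiniteDimensional ℝ E]
variable {M : Type*} [TopologicalSpace M] [ChartedSpace E M]
  [IsManifold 𝓘(ℝ, E) (⊤ : ℕ∞) M]

/-- A symmetric bilinear form of Lorentzian signature `(1, dim E - 1)`: there is a timelike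
vector whose orthogonal complement is positive definite (timelike-negative convention). -/
def IsLorentzForm (b : E →L[ℝ] E →L[ℝ] ℝ) : Prop :=
  (∀ v w, b v w = b w v) ∧ ∃ v, b v v < 0 ∧ ∀ w, b v w = 0 → w ≠ 0 → 0 < b w w

/-- A pseudo-Riemannian metric: a smooth field of symmetric nondegenerate bilinear forms on
the tangent spaces. -/
def IsPseudoMetric (g : M → E →L[ℝ] E →L[ℝ] ℝ) : Prop :=
  ContMDiff 𝓘(ℝ, E) 𝓘(ℝ, E →L[ℝ] E →L[ℝ] ℝ) (⊤ : ℕ∞) g ∧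
    ∀ x : M, (∀ v w, g x v w = g x w v) ∧ ∀ v, (∀ w, g x v w = 0) → v = 0

/-- A Lorentzian metric: a smooth field of Lorentzian bilinear forms on the tangent spaces. -/
def IsLorentzMetric (g : M → E →L[ℝ] E →L[ℝ] ℝ) : Prop :=
  ContMDiff 𝓘(ℝ, E) 𝓘(ℝ, E →L[ℝ] E →L[ℝ] ℝ) (⊤ : ℕ∞) g ∧ ∀ x : M, IsLorentzForm (g x)

/-- A map `f : M → M` is conformal with respect to `g`: it is smooth and pulls back `g` to a
positive multiple of `g`. -/
def ConformalTo (g : M → E →L[ℝ] E →L[ℝ] ℝ) (f : M → M) : Prop :=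
  ContMDiff 𝓘(ℝ, E) 𝓘(ℝ, E) (⊤ : ℕ∞) f ∧ ∃ c : M → ℝ, (∀ x, 0 < c x) ∧
    ∀ (x : M) (v w : TangentSpace 𝓘(ℝ, E) x),
      g (f x) (mfderiv 𝓘(ℝ, E) 𝓘(ℝ, E) f x v) (mfderiv 𝓘(ℝ, E) 𝓘(ℝ, E) f x w)
        = c x * g x v w

/-- A map `f : M → M` is an isometry with respect to `g`: it is smooth and pulls back `g`
to `g`. -/
def IsometryTo (g : M → E →L[ℝ] E →L[ℝ] ℝ) (f : M → M) : Prop :=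
  ContMDiff 𝓘(ℝ, E) 𝓘(ℝ, E) (⊤ : ℕ∞) f ∧
    ∀ (x : M) (v w : TangentSpace 𝓘(ℝ, E) x),
      g (f x) (mfderiv 𝓘(ℝ, E) 𝓘(ℝ, E) f x v) (mfderiv 𝓘(ℝ, E) 𝓘(ℝ, E) f x w)
        = g x v w

/-- `φ : ℝ → M → M` is a one-parameter group of transformations. -/
def IsFlow (φ : ℝ → M → M) : Prop :=
  (∀ x : M, φ 0 x = x) ∧ ∀ (s t : ℝ) (x : M), φ (s + t) x = φ s (φ t x)

/-- The flow `φ` is generated by the vector field `X`: for every `x` the curve `t ↦ φ t x`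
has velocity `X (φ t x)`. -/
def FlowGenerates (φ : ℝ → M → M) (X : (x : M) → TangentSpace 𝓘(ℝ, E) x) : Prop :=
  ∀ (x : M) (t : ℝ), HasMFDerivAt 𝓘(ℝ, ℝ) 𝓘(ℝ, E) (fun s => φ s x) t
    ((ContinuousLinearMap.id ℝ ℝ).smulRight (X (φ t x)))

/-- A conformal vector field: a (complete) vector field whose flow consists of conformal
transformations of `(M, g)`. -/
def IsConformalField (g : M → E →L[ℝ] E →L[ℝ] ℝ)
    (X : (x : M) → TangentSpace 𝓘(ℝ, E) x) : Prop :=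
  ∃ φ : ℝ → M → M, IsFlow φ ∧ FlowGenerates φ X ∧ ∀ t : ℝ, ConformalTo g (φ t)

/-- A Killing vector field: a (complete) vector field whose flow consists of isometries of
`(M, g)`. -/
def IsKillingField (g : M → E →L[ℝ] E →L[ℝ] ℝ)
    (X : (x : M) → TangentSpace 𝓘(ℝ, E) x) : Prop :=
  ∃ φ : ℝ → M → M, IsFlow φ ∧ FlowGenerates φ X ∧ ∀ t : ℝ, IsometryTo g (φ t)

attribute [local instance 100] LieRing.ofAssociativeRing

open NormedSpace Filter Topology

def LinearMap.ofMapSmulAdd {R V W : Type*} [Semiring R] [AddCommMonoid V] [Module R V]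
    [AddCommGroup W] [Module R W] (f : V → W)
    (hf : ∀ (a : R) (x y : V), f (a • x + y) = a • f x + f y) : V →ₗ[R] W :=
  have hf0 : f 0 = 0 := by simpa using hf 1 0 0
  { toFun := f
    map_add' := fun x y => by simpa using hf 1 x y
    map_smul' := fun a x => by simpa [hf0] using hf a x 0 }

section TruncatedExponential

variable {𝕂 V : Type*} [RCLike 𝕂] [NormedAddCommGroup V] [NormedSpace 𝕂 V]

theorem hasDerivAt_sum_pow_div_factorial_smul_pow_apply {D : V →ₗ[𝕂] V} {y : V} {k : ℕ}
    (hD : (D ^ (k + 1)) y = 0) (s : 𝕂) :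
    HasDerivAt (fun t : 𝕂 => ∑ n ∈ Finset.range (k + 1), (t ^ n / n.factorial) • (D ^ n) y)
      (D (∑ n ∈ Finset.range (k + 1), (s ^ n / n.factorial) • (D ^ n) y)) s := by
  have hterm : ∀ n : ℕ, HasDerivAt (fun t : 𝕂 => (t ^ n / n.factorial) • (D ^ n) y)
      ((n * s ^ (n - 1) / n.factorial) • (D ^ n) y) s := fun n =>
    ((hasDerivAt_pow n s).div_const _).smul_const _
  convert HasDerivAt.fun_sum fun n _ => hterm n using 1
  rw [map_sum, Finset.sum_range_succ, map_smul, ← Module.End.mul_apply, ← pow_succ', hD,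
    smul_zero, add_zero]
  conv_rhs => rw [Finset.sum_range_succ']
  simp only [map_smul, ← Module.End.mul_apply, ← pow_succ', CharP.cast_eq_zero, zero_mul,
    zero_div, zero_smul, add_zero, Nat.cast_succ, add_tsub_cancel_right]
  refine Finset.sum_congr rfl fun n _ => ?_
  rw [Nat.factorial_succ, Nat.cast_mul, Nat.cast_succ]
  field_simp

end TruncatedExponential

section ExpConjugation

variable {𝕂 𝔸 : Type*} [RCLike 𝕂] [NormedRing 𝔸] [NormedAlgebra 𝕂 𝔸] [CompleteSpace 𝔸]

theorem eq_exp_smul_mul_mul_exp_neg_smul_of_hasDerivAt {a : 𝔸} {P : 𝕂 → 𝔸}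
    (hP : ∀ s, HasDerivAt P (a * P s - P s * a) s) (t : 𝕂) :
    P t = exp (t • a) * P 0 * exp (-(t • a)) := by
  have hinv : ∀ x : 𝔸, exp x * exp (-x) = 1 := fun x => by
    have hball : ∀ y : 𝔸, y ∈ Metric.eball (0 : 𝔸) (expSeries 𝕂 𝔸).radius := fun y =>
      (expSeries_radius_eq_top 𝕂 𝔸).symm ▸ edist_lt_top _ _
    rw [← exp_add_of_commute_of_mem_ball (Commute.refl x).neg_right (hball x) (hball _),
      add_neg_cancel, exp_zero]
  set F : 𝕂 → 𝔸 := fun u => exp (u • -a) * P u * exp (u • a)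
  have hF : ∀ s, HasDerivAt F 0 s := fun s => by
    refine (((hasDerivAt_exp_smul_const (-a) s).mul (hP s)).mul
      (hasDerivAt_exp_smul_const' a s)).congr_deriv ?_
    simp only [Pi.mul_apply]
    noncomm_ring
  have hFt : F t = P 0 := by
    rw [is_const_of_deriv_eq_zero (fun u => (hF u).differentiableAt) (fun u => (hF u).deriv) t 0]
    simp [F]
  calc P t = exp (t • a) * F t * exp (-(t • a)) := by
        simp only [F, smul_neg, ← mul_assoc, hinv, one_mul]
        rw [mul_assoc, ← neg_neg (t • a), neg_neg, hinv, mul_one]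
    _ = exp (t • a) * P 0 * exp (-(t • a)) := by rw [hFt]

theorem exp_smul_mul_mul_exp_neg_smul_eq_sum {a b : 𝔸} {k : ℕ}
    (hab : (LieAlgebra.ad 𝕂 𝔸 a ^ (k + 1)) b = 0) (t : 𝕂) :
    exp (t • a) * b * exp (-(t • a)) =
      ∑ n ∈ Finset.range (k + 1), (t ^ n / n.factorial) • (LieAlgebra.ad 𝕂 𝔸 a ^ n) b := by
  have hP := eq_exp_smul_mul_mul_exp_neg_smul_of_hasDerivAt (fun s => by
    simpa only [LieAlgebra.ad_apply, Ring.lie_def] using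
      hasDerivAt_sum_pow_div_factorial_smul_pow_apply hab s) t
  simpa [Finset.sum_range_succ'] using hP.symm

end ExpConjugation

theorem LieSubalgebra.exp_smul_mul_mul_exp_neg_smul_eq_coe_sum {m : Type*} [Fintype m]
    [DecidableEq m] (𝔤 : LieSubalgebra ℝ (Matrix m m ℝ)) {X Y : 𝔤} {k : ℕ}
    (h : (LieAlgebra.ad ℝ 𝔤 X ^ (k + 1)) Y = 0) (t : ℝ) :
    exp (t • (X : Matrix m m ℝ)) * Y * exp (-(t • (X : Matrix m m ℝ))) =
      ((∑ n ∈ Finset.range (k + 1), (t ^ n / n.factorial) • (LieAlgebra.ad ℝ 𝔤 X ^ n) Y : 𝔤) :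
        Matrix m m ℝ) := by
  -- `exp` does not depend on the norm, so any Banach-algebra norm on matrices will do.
  let _ := Matrix.linftyOpNormedRing (n := m) (α := ℝ)
  let _ := Matrix.linftyOpNormedAlgebra (n := m) (R := ℝ) (α := ℝ)
  have hc := LieSubalgebra.coe_ad_pow ℝ _ 𝔤 X Y
  refine (_root_.exp_smul_mul_mul_exp_neg_smul_eq_sum (k := k) ?_ t).trans ?_
  · rw [← hc, h]
    rfl
  · push_cast [hc]
    rfl

theorem tendsto_zero_of_sum_pow_smul_eq_zero {V : Type*} [NormedAddCommGroup V]
    [NormedSpace ℝ V] {k : ℕ} {w : ℕ → ℝ → V}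
    (hsum : ∀ᶠ t in atTop, ∑ n ∈ Finset.range (k + 1), t ^ n • w n t = 0)
    (hbdd : ∀ n < k, IsBoundedUnder (· ≤ ·) atTop (norm ∘ w n)) :
    Tendsto (w k) atTop (𝓝 0) := by
  have hlower : Tendsto (fun t => ∑ n ∈ Finset.range k, (t ^ (k - n))⁻¹ • w n t) atTop (𝓝 0) := by
    rw [← Finset.sum_const_zero (s := Finset.range k)]
    refine tendsto_finsetSum _ fun n hn => ?_
    have hn : n < k := Finset.mem_range.mp hn
    exact (tendsto_inv_atTop_zero.comp (tendsto_pow_atTop (by omega))).zero_smul_isBoundedUnder_le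
      (hbdd n hn)
  rw [← neg_zero]
  refine hlower.neg.congr' ?_
  filter_upwards [hsum, eventually_gt_atTop 0] with t ht ht0
  rw [Finset.sum_range_succ] at ht
  calc -∑ n ∈ Finset.range k, (t ^ (k - n))⁻¹ • w n t
      = -(t ^ k)⁻¹ • ∑ n ∈ Finset.range k, t ^ n • w n t := by
        rw [Finset.smul_sum, ← Finset.sum_neg_distrib]
        refine Finset.sum_congr rfl fun n hn => ?_
        rw [pow_sub₀ t ht0.ne' (Finset.mem_range.mp hn).le, mul_inv, inv_inv, smul_smul, neg_mul,
          neg_smul]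
    _ = w k t := by
        rw [eq_neg_of_add_eq_zero_left ht, smul_neg, neg_smul, neg_neg, smul_smul,
          inv_mul_cancel₀ (pow_ne_zero k ht0.ne'), one_smul]

theorem Continuous.isBoundedUnder_le_norm_comp {X V ι : Type*} [TopologicalSpace X]
    [CompactSpace X] [SeminormedAddCommGroup V] {f : X → V} (hf : Continuous f) (l : Filter ι)
    (y : ι → X) : IsBoundedUnder (· ≤ ·) l fun i => ‖f (y i)‖ :=
  BddAbove.isBoundedUnder_of_range <| (isCompact_range hf.norm).bddAbove.mono <|
    Set.range_comp_subset_range y fun x => ‖f x‖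

open NormedSpace in
theorem induced_field_vanishes_of_iterated_bracket_general [CompactSpace M] (d : ℕ)
    (𝔤 : LieSubalgebra ℝ (Matrix (Fin d) (Fin d) ℝ))
    (v : 𝔤 → (x : M) → TangentSpace 𝓘(ℝ, E) x)
    (hlin : ∀ (a : ℝ) (A B : 𝔤) (x : M), v (a • A + B) x = a • v A x + v B x)
    (hcont : ∀ A : 𝔤, Continuous (fun x => v A x : M → E))
    (φ : 𝔤 → ℝ → M → M)
    (hequiv : ∀ (A B C : 𝔤) (t : ℝ) (x : M),
      (C : Matrix (Fin d) (Fin d) ℝ) =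
        exp (t • (A : Matrix (Fin d) (Fin d) ℝ)) * B *
          exp (-(t • (A : Matrix (Fin d) (Fin d) ℝ))) →
      mfderiv 𝓘(ℝ, E) 𝓘(ℝ, E) (φ A t) x (v B x) = v C (φ A t x))
    (X Y Z : 𝔤) (k : ℕ)
    (hZ : Z = ((LieAlgebra.ad ℝ 𝔤 X) ^ k) Y) (hcent : ⁅X, Z⁆ = 0)
    (hY0 : ∃ x : M, v Y x = 0) :
    ∃ x : M, v Z x = 0 := by
  obtain ⟨x₀, hx₀⟩ := hY0
  have hcont_smul : ∀ (a : ℝ) (A : 𝔤), Continuous fun x => a • v A x := fun a A =>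
    (hcont A).const_smul a
  set c : ℕ → 𝔤 := fun n => (LieAlgebra.ad ℝ 𝔤 X ^ n) Y
  have hnil : c (k + 1) = 0 := by
    simp only [c, pow_succ', Module.End.mul_apply, ← hZ]
    exact hcent
  have horbit : ∀ t : ℝ,
      ∑ n ∈ Finset.range (k + 1), t ^ n • ((n.factorial : ℝ)⁻¹ • v (c n) (φ X t x₀)) = 0 := by
    intro t
    let vₜ := LinearMap.ofMapSmulAdd (fun A => v A (φ X t x₀)) fun a A B => hlin a A B _
    have h : 0 = vₜ (∑ n ∈ Finset.range (k + 1), (t ^ n / n.factorial) • c n) := by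
      rw [← map_zero (mfderiv 𝓘(ℝ, E) 𝓘(ℝ, E) (φ X t) x₀), ← hx₀]
      exact hequiv X Y _ t x₀ (𝔤.exp_smul_mul_mul_exp_neg_smul_eq_coe_sum hnil t).symm
    simp only [map_sum, map_smul] at h
    simp only [smul_smul, ← div_eq_mul_inv]
    exact h.symm
  have hlim := tendsto_zero_of_sum_pow_smul_eq_zero (Eventually.of_forall horbit) fun n _ =>
    (hcont_smul _ (c n)).isBoundedUnder_le_norm_comp atTop _
  obtain ⟨p, hp⟩ := (isCompact_range (hcont_smul (k.factorial : ℝ)⁻¹ Z)).isClosed.mem_of_tendsto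
    (by simpa only [c, ← hZ] using hlim) (Eventually.of_forall fun t => mem_range_self _)
  exact ⟨p, (smul_eq_zero_iff_right (by positivity)).mp hp⟩

open NormedSpace in
/-- Let `M` be a compact manifold on which a Lie group acts smoothly, with
(linear, by Ado's theorem) Lie algebra `𝔤`: each `A ∈ 𝔤` induces a complete vector field
`v A` on `M` with flow `φ A`, depending linearly on `A` and satisfying the adjoint
equivariance `(φ A t)_* (v B) = v (Ad(exp tA) B)`.  Let `X, Y ∈ 𝔤` and `k ≥ 1` be such that
`Z := ad(X)^k Y` is centralized by `X`.  If the vector field `v Y` vanishes at some point of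
`M`, then so does `v Z`. -/
theorem induced_field_vanishes_of_iterated_bracket [CompactSpace M] (d : ℕ)
    (𝔤 : LieSubalgebra ℝ (Matrix (Fin d) (Fin d) ℝ))
    (v : 𝔤 → (x : M) → TangentSpace 𝓘(ℝ, E) x)
    (hlin : ∀ (a : ℝ) (A B : 𝔤) (x : M), v (a • A + B) x = a • v A x + v B x)
    (hcont : ∀ A : 𝔤, Continuous (fun x => v A x : M → E))
    (φ : 𝔤 → ℝ → M → M)
    (hflow : ∀ A : 𝔤, IsFlow (φ A) ∧ FlowGenerates (φ A) (v A))
    (hsmooth : ∀ (A : 𝔤) (t : ℝ), ContMDiff 𝓘(ℝ, E) 𝓘(ℝ, E) (⊤ : ℕ∞) (φ A t))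
    (hequiv : ∀ (A B C : 𝔤) (t : ℝ) (x : M),
      (C : Matrix (Fin d) (Fin d) ℝ) =
        exp (t • (A : Matrix (Fin d) (Fin d) ℝ)) * B *
          exp (-(t • (A : Matrix (Fin d) (Fin d) ℝ))) →
      mfderiv 𝓘(ℝ, E) 𝓘(ℝ, E) (φ A t) x (v B x) = v C (φ A t x))
    (X Y Z : 𝔤) (k : ℕ) (hk : 1 ≤ k)
    (hZ : Z = ((LieAlgebra.ad ℝ 𝔤 X) ^ k) Y) (hcent : ⁅X, Z⁆ = 0)
    (hY0 : ∃ x : M, v Y x = 0) :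
    ∃ x : M, v Z x = 0 :=
  induced_field_vanishes_of_iterated_bracket_general d 𝔤 v hlin hcont φ hequiv X Y Z k hZ hcent hY0
end
end

section
/- Let N be an abelian Lie group acting conformally on a Lorentzian manifold (M,g). If every N-orbit has dimension at least 2, then N is inessential, i.e. there is a metric g' conformal to g which is N-invariant. -/
open Manifold

section

variable {E : Type*} [NormedAddCommGroup E] [NormedSpace ℝ E]
  {M : Type*} [TopologicalSpace M] [ChartedSpace E M]

def LinearMap.ofMapSMulAdd {R V W : Type*} [Semiring R] [AddCommGroup V] [AddCommGroup W]
    [Module R V] [Module R W] (f : V → W)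
    (hf : ∀ (a : R) (x y : V), f (a • x + y) = a • f x + f y) : V →ₗ[R] W where
  toFun := f
  map_add' x y := by simpa using hf 1 x y
  map_smul' a x := by
    have h0 : f 0 = 0 := by simpa using hf 1 0 0
    simpa [h0] using hf a x 0

theorem IsLorentzForm.finrank_le_one_of_isotropic {b : E →L[ℝ] E →L[ℝ] ℝ} (hb : IsLorentzForm b)
    {W : Submodule ℝ E} (hW : ∀ w ∈ W, b w w = 0) : Module.finrank ℝ W ≤ 1 := by
  obtain ⟨-, v, -, hpos⟩ := hb
  -- pairing with the timelike vector `v` is injective on `W`, since `v^⊥` is spacelike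
  have hinj : Function.Injective ((b v).toLinearMap ∘ₗ W.subtype) := by
    refine LinearMap.ker_eq_bot.mp (LinearMap.ker_eq_bot'.mpr fun w hw => ?_)
    by_contra hne
    simpa [hW w w.2] using hpos w hw (by simpa using hne)
  simpa using LinearMap.finrank_le_finrank_of_injective hinj

theorem IsLorentzForm.exists_apply_ne_zero {b : E →L[ℝ] E →L[ℝ] ℝ} (hb : IsLorentzForm b)
    {s : Set E} (hs : 2 ≤ Module.finrank ℝ (Submodule.span ℝ s)) :
    ∃ u ∈ s, ∃ w ∈ s, b u w ≠ 0 := by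
  by_contra! hzero
  have hright : ∀ u ∈ s, ∀ w ∈ Submodule.span ℝ s, b u w = 0 := fun u hu =>
    Submodule.span_le (p := LinearMap.ker (b u).toLinearMap).mpr fun w hw => hzero u hu w hw
  have hiso : ∀ w ∈ Submodule.span ℝ s, b w w = 0 := fun w hw =>
    Submodule.span_le (p := LinearMap.ker (b.flip w).toLinearMap).mpr
      (fun u hu => hright u hu w hw) hw
  have := hb.finrank_le_one_of_isotropic hiso
  omega

theorem LinearMap.sum_sq_apply_basis_pos {K V ι : Type*} [Field K] [LinearOrder K]
    [IsStrictOrderedRing K] [AddCommGroup V] [Module K V] [Fintype ι]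
    (b : Module.Basis ι K V) {β : V →ₗ[K] V →ₗ[K] K} (hβ : β ≠ 0) :
    0 < ∑ i, ∑ j, β (b i) (b j) ^ 2 := by
  obtain ⟨i, j, hij⟩ : ∃ i j, β (b i) (b j) ≠ 0 := by
    by_contra! h
    exact hβ (b.ext fun i => b.ext fun j => h i j)
  refine Finset.sum_pos' (fun _ _ => Finset.sum_nonneg fun _ _ => sq_nonneg _)
    ⟨i, Finset.mem_univ _, Finset.sum_pos' (fun _ _ => sq_nonneg _)
      ⟨j, Finset.mem_univ _, by positivity⟩⟩

/-- For a basis `X` of the acting Lie algebra this is `φ(x)²` in the paper's notation. -/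
noncomputable def gramSqSum (g : M → E →L[ℝ] E →L[ℝ] ℝ) {ι : Type*} [Fintype ι]
    (X : ι → (x : M) → TangentSpace 𝓘(ℝ, E) x) (x : M) : ℝ :=
  ∑ i, ∑ j, g x (X i x) (X j x) ^ 2

theorem continuous_gramSqSum {g : M → E →L[ℝ] E →L[ℝ] ℝ} {ι : Type*} [Fintype ι]
    {X : ι → (x : M) → TangentSpace 𝓘(ℝ, E) x}
    (hX : ∀ i j, Continuous fun x => g x (X i x) (X j x)) : Continuous (gramSqSum g X) :=
  continuous_finsetSum _ fun i _ => continuous_finsetSum _ fun j _ => (hX i j).pow 2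

theorem gramSqSum_comp {g : M → E →L[ℝ] E →L[ℝ] ℝ} {ι : Type*} [Fintype ι]
    {X : ι → (x : M) → TangentSpace 𝓘(ℝ, E) x} {f : M → M} {c : M → ℝ}
    (hc : ∀ (x : M) (u w : TangentSpace 𝓘(ℝ, E) x),
      g (f x) (mfderiv 𝓘(ℝ, E) 𝓘(ℝ, E) f x u) (mfderiv 𝓘(ℝ, E) 𝓘(ℝ, E) f x w) = c x * g x u w)
    (hX : ∀ i x, mfderiv 𝓘(ℝ, E) 𝓘(ℝ, E) f x (X i x) = X i (f x)) (x : M) :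
    gramSqSum g X (f x) = c x ^ 2 * gramSqSum g X x := by
  simp only [gramSqSum, Finset.mul_sum, ← hX, hc, mul_pow]

theorem isometryTo_smul_of_conformal {g : M → E →L[ℝ] E →L[ℝ] ℝ} {f : M → M} {c ρ : M → ℝ}
    (hf : ContMDiff 𝓘(ℝ, E) 𝓘(ℝ, E) (⊤ : ℕ∞) f)
    (hc : ∀ (x : M) (u w : TangentSpace 𝓘(ℝ, E) x),
      g (f x) (mfderiv 𝓘(ℝ, E) 𝓘(ℝ, E) f x u) (mfderiv 𝓘(ℝ, E) 𝓘(ℝ, E) f x w) = c x * g x u w)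
    (hρ : ∀ x, ρ (f x) * c x = ρ x) :
    IsometryTo (fun x => ρ x • g x) f :=
  ⟨hf, fun x u w => by
    show ρ (f x) * g (f x) _ _ = ρ x * g x u w
    rw [hc, ← mul_assoc, hρ]⟩

theorem gramSqSum_pos_of_two_le_finrank {g : M → E →L[ℝ] E →L[ℝ] ℝ} (hg : ∀ x, IsLorentzForm (g x))
    {𝔫 ι : Type*} [AddCommGroup 𝔫] [Module ℝ 𝔫] [Fintype ι] (b : Module.Basis ι ℝ 𝔫)
    {v : 𝔫 → (x : M) → TangentSpace 𝓘(ℝ, E) x}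
    (hlin : ∀ (a : ℝ) (A B : 𝔫) (x : M), v (a • A + B) x = a • v A x + v B x) {x : M}
    (horb : 2 ≤ Module.finrank ℝ (Submodule.span ℝ (Set.range fun A : 𝔫 => (v A x : E)))) :
    0 < gramSqSum g (fun i => v (b i)) x := by
  let L : 𝔫 →ₗ[ℝ] E := LinearMap.ofMapSMulAdd (fun A => v A x) fun a A B => hlin a A B x
  obtain ⟨_, ⟨A, rfl⟩, _, ⟨B, rfl⟩, hAB⟩ := (hg x).exists_apply_ne_zero horb
  exact LinearMap.sum_sq_apply_basis_pos b (β := (g x).toLinearMap₁₂.compl₁₂ L L)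
    fun h => hAB (LinearMap.congr_fun₂ h A B)

end

variable {E : Type*} [NormedAddCommGroup E] [NormedSpace ℝ E] [FiniteDimensional ℝ E]
variable {M : Type*} [TopologicalSpace M] [ChartedSpace E M]
  [IsManifold 𝓘(ℝ, E) (⊤ : ℕ∞) M]

theorem abelian_orbits_dim_ge_two_inessential_general
    (g : M → E →L[ℝ] E →L[ℝ] ℝ) (hg : IsLorentzMetric g)
    (𝔫 : Type*) [AddCommGroup 𝔫] [Module ℝ 𝔫] [FiniteDimensional ℝ 𝔫]
    (v : 𝔫 → (x : M) → TangentSpace 𝓘(ℝ, E) x)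
    (hlin : ∀ (a : ℝ) (A B : 𝔫) (x : M), v (a • A + B) x = a • v A x + v B x)
    (hcont : ∀ A B : 𝔫, Continuous fun x : M => g x (v A x) (v B x))
    (φ : 𝔫 → ℝ → M → M)
    (hconf : ∀ (A : 𝔫) (t : ℝ), ConformalTo g (φ A t))
    (hcomm : ∀ (A B : 𝔫) (t : ℝ) (x : M),
      mfderiv 𝓘(ℝ, E) 𝓘(ℝ, E) (φ A t) x (v B x) = v B (φ A t x))
    (horb : ∀ x : M, 2 ≤ Module.finrank ℝ
      (Submodule.span ℝ (Set.range fun A : 𝔫 => (v A x : E)))) :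
    ∃ ρ : M → ℝ, Continuous ρ ∧ (∀ x, 0 < ρ x) ∧
      ∀ (A : 𝔫) (t : ℝ), IsometryTo (fun x => ρ x • g x) (φ A t) := by
  let b := Module.finBasis ℝ 𝔫
  let S := gramSqSum g fun i => v (b i)
  have hS_pos : ∀ x, 0 < √(S x) := fun x =>
    Real.sqrt_pos.2 (gramSqSum_pos_of_two_le_finrank hg.2 b hlin (horb x))
  refine ⟨fun x => (√(S x))⁻¹, ?_, fun x => inv_pos.2 (hS_pos x), fun A t => ?_⟩
  · exact (continuous_gramSqSum fun i j => hcont (b i) (b j)).sqrt.inv₀ fun x => (hS_pos x).ne'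
  obtain ⟨hsmooth, c, hc_pos, hc⟩ := hconf A t
  refine isometryTo_smul_of_conformal hsmooth hc fun x => ?_
  dsimp only [S]
  rw [gramSqSum_comp hc (fun i => hcomm A (b i) t) x, Real.sqrt_mul (sq_nonneg _),
    Real.sqrt_sq (hc_pos x).le, mul_inv, mul_right_comm, inv_mul_cancel₀ (hc_pos x).ne', one_mul]

/-- Let `N` be an abelian Lie group (with Lie algebra `𝔫`) acting
conformally on a Lorentzian manifold `(M, g)`: each `A ∈ 𝔫` induces a complete conformal
vector field `v A` with flow `φ A`, depending linearly on `A`, and commutativity of `N` is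
expressed by the flows preserving the fields: `(φ A t)_* (v B) = v B`.  If every `N`-orbit
has dimension at least 2, then `N` is inessential: there is a positive function `ρ` such that
the conformal metric `ρ • g` is invariant under all the flows `φ A`. -/
theorem abelian_orbits_dim_ge_two_inessential
    (g : M → E →L[ℝ] E →L[ℝ] ℝ) (hg : IsLorentzMetric g)
    (𝔫 : Type*) [AddCommGroup 𝔫] [Module ℝ 𝔫] [FiniteDimensional ℝ 𝔫]
    (v : 𝔫 → (x : M) → TangentSpace 𝓘(ℝ, E) x)
    (hlin : ∀ (a : ℝ) (A B : 𝔫) (x : M), v (a • A + B) x = a • v A x + v B x)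
    (hcont : ∀ A B : 𝔫, Continuous fun x : M => g x (v A x) (v B x))
    (φ : 𝔫 → ℝ → M → M)
    (hflow : ∀ A : 𝔫, IsFlow (φ A) ∧ FlowGenerates (φ A) (v A))
    (hconf : ∀ (A : 𝔫) (t : ℝ), ConformalTo g (φ A t))
    (hcomm : ∀ (A B : 𝔫) (t : ℝ) (x : M),
      mfderiv 𝓘(ℝ, E) 𝓘(ℝ, E) (φ A t) x (v B x) = v B (φ A t x))
    (horb : ∀ x : M, 2 ≤ Module.finrank ℝ
      (Submodule.span ℝ (Set.range fun A : 𝔫 => (v A x : E)))) :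
    ∃ ρ : M → ℝ, Continuous ρ ∧ (∀ x, 0 < ρ x) ∧
      ∀ (A : 𝔫) (t : ℝ), IsometryTo (fun x => ρ x • g x) (φ A t) :=
  abelian_orbits_dim_ge_two_inessential_general g hg 𝔫 v hlin hcont φ hconf hcomm horb
end

section
/- In so(2,n) with restricted root system {±α, ±β, ±α±β} as in B₂: let H be an element of the ℝ-split Cartan subalgebra 𝔞, and let Y, Z ∈ 𝔭 (the parabolic subalgebra stabilizing an isotropic line) satisfy [H,Y] = λ₁ Y, [H,Z] = λ₂ Z with λ₁, λ₂ nonzero real numbers, λ₁ ≠ λ₂, and [Y,Z] = 0. Then Y ∈ 𝔭⁺ or Z ∈ 𝔭⁺, where 𝔭⁺ = 𝔤_{α-β} ⊕ 𝔤_α ⊕ 𝔤_{α+β} is the nilradical of 𝔭. -/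
open Matrix

/-- The matrix of the quadratic form `2u₀u_{n+1} + 2u₁u_n + u₂² + ⋯ + u_{n-1}²` of signature
`(2, n)` on `ℝ^{n+2}` (the paper's fixed coordinates for `so(2,n)`). -/
noncomputable def formMatrix2n (n : ℕ) : Matrix (Fin (n + 2)) (Fin (n + 2)) ℝ :=
  Matrix.of fun i j =>
    if i.val + j.val = n + 1 ∧ (i.val ≤ 1 ∨ j.val ≤ 1) then 1
    else if i = j ∧ 2 ≤ i.val ∧ i.val ≤ n - 1 then 1 else 0

/-- The grading element `A_α = diag(1, 0, …, 0, -1)` of `so(2,n)`. -/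
noncomputable def gradingElement (n : ℕ) : Matrix (Fin (n + 2)) (Fin (n + 2)) ℝ :=
  Matrix.diagonal fun i => if i.val = 0 then (1 : ℝ) else if i.val = n + 1 then -1 else 0

/-- Membership in the ℝ-split Cartan subalgebra `𝔞 = {diag(λ, μ, 0, …, 0, -μ, -λ)}`. -/
def InSplitCartan (n : ℕ) (H : Matrix (Fin (n + 2)) (Fin (n + 2)) ℝ) : Prop :=
  ∃ l m : ℝ, H = Matrix.diagonal fun i =>
    if i.val = 0 then l else if i.val = 1 then m
    else if i.val = n then -m else if i.val = n + 1 then -l else 0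

/-!
Write `H = diag(l, m, 0, …, 0, -m, -l)`, so that `β(H) = m`. Since `H` and the grading element
`A_α` are diagonal, both eigenvalue equations can be read off entrywise. The rows and columns
`1, …, n` form the `𝔤₀`-block of the grading by `A_α`, and an eigenvector of nonzero weight in
`𝔭` lies in `𝔭⁺` unless it has a nonzero entry there; such an entry belongs to `𝔤_β` (row `1`)
or to `𝔤_{-β}` (column `1`), which forces the weight to be `m` or `-m`. Since `λ₁ ≠ λ₂`, one of
`Y, Z` has a nonzero `𝔤_β`-component `u` and the other a nonzero `𝔤_{-β}`-component `v`. The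
`𝔤₀`-block of `[Y, Z] = 0` says that `u ⬝ v = 0` and `u vᵀ = v uᵀ`, so `u = 0` or `v = 0`.
-/

theorem Matrix.lie_diagonal_apply {ι R : Type*} [Fintype ι] [DecidableEq ι] [CommRing R]
    (d : ι → R) (Y : Matrix ι ι R) (i j : ι) :
    ⁅diagonal d, Y⁆ i j = (d i - d j) * Y i j := by
  rw [Ring.lie_def, sub_apply, diagonal_mul, mul_diagonal]
  ring

theorem Matrix.lie_diagonal_eq_smul_iff {ι R : Type*} [Fintype ι] [DecidableEq ι] [CommRing R]
    [NoZeroDivisors R] (d : ι → R) (Y : Matrix ι ι R) (c : R) :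
    ⁅diagonal d, Y⁆ = c • Y ↔ ∀ i j, Y i j ≠ 0 → d i - d j = c := by
  simp only [← Matrix.ext_iff, lie_diagonal_apply, smul_apply, smul_eq_mul,
    ← sub_eq_zero (b := c * _), ← sub_mul, mul_eq_zero, sub_eq_zero]
  exact forall₂_congr fun i j => or_iff_not_imp_right

theorem Matrix.apply_eq_zero_of_mulVec_single_eq_smul {ι R : Type*} [Fintype ι] [DecidableEq ι]
    [Semiring R] {Y : Matrix ι ι R} {a : ι} {c : R}
    (h : Y *ᵥ Pi.single a 1 = c • Pi.single a 1) {i : ι} (hi : i ≠ a) : Y i a = 0 := by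
  simpa [Pi.single_apply, hi] using congrFun h i

theorem Finset.forall_eq_zero_or_forall_eq_zero_of_orthogonal_of_parallel {ι R : Type*}
    [CommRing R] [LinearOrder R] [IsStrictOrderedRing R] {s : Finset ι} {u v : ι → R}
    (hpar : ∀ j ∈ s, ∀ k ∈ s, u j * v k = v j * u k) (horth : ∑ k ∈ s, u k * v k = 0) :
    (∀ k ∈ s, u k = 0) ∨ ∀ k ∈ s, v k = 0 := by
  by_cases hv : ∀ k ∈ s, v k = 0
  · exact Or.inr hv
  refine Or.inl fun j hj => ?_
  have hsq : ∑ k ∈ s, v k ^ 2 ≠ 0 := by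
    rw [Ne, Finset.sum_eq_zero_iff_of_nonneg fun k _ => sq_nonneg (v k)]
    simpa using hv
  have : u j * ∑ k ∈ s, v k ^ 2 = v j * ∑ k ∈ s, u k * v k := by
    simp only [Finset.mul_sum, sq, ← mul_assoc]
    exact Finset.sum_congr rfl fun k hk => by rw [hpar j hj k hk]
  simpa [horth, hsq] using this

namespace SO2n

variable {n : ℕ}

/-- The involution swapping `0 ↔ n + 1` and `1 ↔ n` and fixing all other indices. -/
def sig (n : ℕ) : Equiv.Perm (Fin (n + 2)) :=
  Function.Involutive.toPerm (fun i => if i.val ≤ 1 ∨ n ≤ i.val then i.rev else i) fun i => by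
    ext
    dsimp only
    split_ifs <;> simp_all [Fin.val_rev]; omega

theorem sig_apply (i : Fin (n + 2)) : sig n i = if i.val ≤ 1 ∨ n ≤ i.val then i.rev else i :=
  rfl

theorem sig_symm (n : ℕ) : (sig n).symm = sig n :=
  Function.Involutive.toPerm_symm _

theorem sig_sig (i : Fin (n + 2)) : sig n (sig n i) = i :=
  calc sig n (sig n i) = (sig n).symm (sig n i) := by rw [sig_symm]
    _ = i := Equiv.symm_apply_apply _ _

@[simp] theorem sig_zero : sig n 0 = Fin.last (n + 1) := by
  ext; simp [sig_apply]

@[simp] theorem sig_last : sig n (Fin.last (n + 1)) = 0 := by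
  ext; simp [sig_apply]

@[simp] theorem sig_one : sig n 1 = (Fin.last n).castSucc := by
  ext; simp [sig_apply]

@[simp] theorem sig_castSucc_last : sig n (Fin.last n).castSucc = 1 := by
  ext; simp [sig_apply]

theorem formMatrix2n_eq (n : ℕ) : formMatrix2n n = (sig n).toPEquiv.toMatrix := by
  ext i j
  simp only [formMatrix2n, of_apply, PEquiv.toMatrix_apply, Equiv.toPEquiv_apply, Option.mem_def,
    Option.some.injEq, sig_apply, Fin.ext_iff]
  split_ifs <;> simp_all [Fin.val_rev] <;> omega

theorem mem_so_iff (Y : Matrix (Fin (n + 2)) (Fin (n + 2)) ℝ) :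
    Yᵀ * formMatrix2n n + formMatrix2n n * Y = 0 ↔ ∀ i j, Y (sig n j) i + Y (sig n i) j = 0 := by
  simp [← Matrix.ext_iff, formMatrix2n_eq, PEquiv.mul_toMatrix_toPEquiv,
    PEquiv.toMatrix_toPEquiv_mul, sig_symm]

def definiteIndices (n : ℕ) : Finset (Fin (n + 2)) :=
  Finset.univ.filter fun k => 2 ≤ k.val ∧ k.val ≤ n - 1

theorem mem_definiteIndices {k : Fin (n + 2)} :
    k ∈ definiteIndices n ↔ 2 ≤ k.val ∧ k.val ≤ n - 1 := by
  simp [definiteIndices]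

theorem ne_zero_of_mem_definiteIndices {k : Fin (n + 2)} (hk : k ∈ definiteIndices n) :
    k ≠ 0 := by
  rw [mem_definiteIndices] at hk
  rw [ne_eq, Fin.ext_iff, Fin.val_zero]
  omega

theorem ne_last_of_mem_definiteIndices {k : Fin (n + 2)} (hk : k ∈ definiteIndices n) :
    k ≠ Fin.last (n + 1) := by
  rw [mem_definiteIndices] at hk
  rw [ne_eq, Fin.ext_iff, Fin.val_last]
  omega

theorem sig_of_mem_definiteIndices {k : Fin (n + 2)} (hk : k ∈ definiteIndices n) :
    sig n k = k := by
  rw [mem_definiteIndices] at hk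
  rw [sig_apply, if_neg (by omega)]

theorem eq_one_or_eq_castSucc_last_or_mem_definiteIndices {i : Fin (n + 2)} (h0 : i ≠ 0)
    (hl : i ≠ Fin.last (n + 1)) :
    i = 1 ∨ i = (Fin.last n).castSucc ∨ i ∈ definiteIndices n := by
  simp only [ne_eq, Fin.ext_iff, Fin.val_zero, Fin.val_last, Fin.val_one, Fin.val_castSucc,
    mem_definiteIndices] at *
  omega

theorem sum_univ_eq_add_sum_definiteIndices (hn : 2 ≤ n) {M : Type*} [AddCommMonoid M]
    (f : Fin (n + 2) → M) :
    ∑ t, f t = f 0 + f 1 + f (Fin.last n).castSucc + f (Fin.last (n + 1)) +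
      ∑ t ∈ definiteIndices n, f t := by
  have huniv : (Finset.univ : Finset (Fin (n + 2))) =
      insert 0 (insert 1 (insert (Fin.last n).castSucc (insert (Fin.last (n + 1))
        (definiteIndices n)))) := by
    ext t
    simp only [Finset.mem_univ, Finset.mem_insert, mem_definiteIndices, true_iff, Fin.ext_iff,
      Fin.val_zero, Fin.val_one, Fin.val_castSucc, Fin.val_last]
    omega
  rw [huniv, Finset.sum_insert, Finset.sum_insert, Finset.sum_insert, Finset.sum_insert]
  · simp only [add_assoc]
  all_goals
    simp only [Finset.mem_insert, mem_definiteIndices, Fin.ext_iff, Fin.val_zero, Fin.val_one,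
      Fin.val_castSucc, Fin.val_last]
    omega

def cartanDiag (n : ℕ) (l m : ℝ) (i : Fin (n + 2)) : ℝ :=
  if i.val = 0 then l else if i.val = 1 then m
    else if i.val = n then -m else if i.val = n + 1 then -l else 0

theorem inSplitCartan_iff {H : Matrix (Fin (n + 2)) (Fin (n + 2)) ℝ} :
    InSplitCartan n H ↔ ∃ l m, H = diagonal (cartanDiag n l m) :=
  Iff.rfl

variable {l m c : ℝ}

@[simp] theorem cartanDiag_one : cartanDiag n l m 1 = m := by
  simp [cartanDiag]

theorem cartanDiag_castSucc_last (hn : 2 ≤ n) : cartanDiag n l m (Fin.last n).castSucc = -m := by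
  simp only [cartanDiag, Fin.val_castSucc, Fin.val_last]
  split_ifs <;> first | rfl | omega

theorem cartanDiag_of_mem_definiteIndices {k : Fin (n + 2)} (hk : k ∈ definiteIndices n) :
    cartanDiag n l m k = 0 := by
  rw [mem_definiteIndices] at hk
  simp only [cartanDiag]
  split_ifs <;> first | rfl | omega

/-- `Y ∈ 𝔭 ∩ so(2,n)` is an eigenvector of `ad H` with eigenvalue `c`, where
`H = diag(l, m, 0, …, 0, -m, -l) ∈ 𝔞`. -/
structure IsParabolicEigenvector (n : ℕ) (l m c : ℝ) (Y : Matrix (Fin (n + 2)) (Fin (n + 2)) ℝ) :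
    Prop where
  mem_so : Yᵀ * formMatrix2n n + formMatrix2n n * Y = 0
  mem_parabolic : ∃ a : ℝ, Y *ᵥ Pi.single 0 1 = a • Pi.single 0 1
  lie_cartan : ⁅diagonal (cartanDiag n l m), Y⁆ = c • Y

namespace IsParabolicEigenvector

section

variable {Y : Matrix (Fin (n + 2)) (Fin (n + 2)) ℝ} (hY : IsParabolicEigenvector n l m c Y)
include hY

theorem apply_sig_add (i j : Fin (n + 2)) : Y (sig n j) i + Y (sig n i) j = 0 :=
  (mem_so_iff Y).1 hY.mem_so i j

theorem apply_zero_right {i : Fin (n + 2)} (hi : i ≠ 0) : Y i 0 = 0 :=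
  let ⟨_, h⟩ := hY.mem_parabolic
  apply_eq_zero_of_mulVec_single_eq_smul h hi

theorem sub_eq_of_apply_ne_zero {i j : Fin (n + 2)} (h : Y i j ≠ 0) :
    cartanDiag n l m i - cartanDiag n l m j = c :=
  (lie_diagonal_eq_smul_iff _ Y c).1 hY.lie_cartan i j h

theorem apply_eq_zero_of_sub_ne {i j : Fin (n + 2)}
    (h : cartanDiag n l m i - cartanDiag n l m j ≠ c) : Y i j = 0 :=
  not_imp_comm.1 hY.sub_eq_of_apply_ne_zero h

theorem apply_self (hc : c ≠ 0) (i : Fin (n + 2)) : Y i i = 0 :=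
  hY.apply_eq_zero_of_sub_ne (by rwa [sub_self, ne_comm])

theorem apply_sig_self (i : Fin (n + 2)) : Y (sig n i) i = 0 := by
  linarith [hY.apply_sig_add i i]

theorem apply_last {j : Fin (n + 2)} (hj : j ≠ Fin.last (n + 1)) :
    Y (Fin.last (n + 1)) j = 0 := by
  have hsig : sig n j ≠ 0 := fun h => hj (by rw [← sig_sig j, h, sig_zero])
  simpa [hY.apply_zero_right hsig] using hY.apply_sig_add 0 j

theorem apply_one_castSucc_last : Y 1 (Fin.last n).castSucc = 0 := by
  simpa using hY.apply_sig_self (Fin.last n).castSucc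

theorem apply_castSucc_last_one : Y (Fin.last n).castSucc 1 = 0 := by
  simpa using hY.apply_sig_self 1

theorem apply_one_add_apply_castSucc_last {k : Fin (n + 2)} (hk : k ∈ definiteIndices n) :
    Y 1 k + Y k (Fin.last n).castSucc = 0 := by
  simpa [sig_of_mem_definiteIndices hk] using hY.apply_sig_add k (Fin.last n).castSucc

theorem apply_castSucc_last_add_apply_one {k : Fin (n + 2)} (hk : k ∈ definiteIndices n) :
    Y (Fin.last n).castSucc k + Y k 1 = 0 := by
  simpa [sig_of_mem_definiteIndices hk] using hY.apply_sig_add k 1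

theorem apply_of_mem_definiteIndices (hc : c ≠ 0) {j k : Fin (n + 2)}
    (hj : j ∈ definiteIndices n) (hk : k ∈ definiteIndices n) : Y j k = 0 :=
  hY.apply_eq_zero_of_sub_ne <| by
    rwa [cartanDiag_of_mem_definiteIndices hj, cartanDiag_of_mem_definiteIndices hk, sub_zero,
      ne_comm]

theorem one_apply_eq_zero (hc : c ≠ m) {k : Fin (n + 2)} (hk : k ∈ definiteIndices n) :
    Y 1 k = 0 :=
  hY.apply_eq_zero_of_sub_ne <| by
    rwa [cartanDiag_one, cartanDiag_of_mem_definiteIndices hk, sub_zero, ne_comm]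

theorem apply_one_eq_zero (hc : c ≠ -m) {k : Fin (n + 2)} (hk : k ∈ definiteIndices n) :
    Y k 1 = 0 :=
  hY.apply_eq_zero_of_sub_ne <| by
    rwa [cartanDiag_one, cartanDiag_of_mem_definiteIndices hk, zero_sub, ne_comm]

theorem apply_castSucc_last_eq_zero (hn : 2 ≤ n) (hc : c ≠ m) {k : Fin (n + 2)}
    (hk : k ∈ definiteIndices n) : Y k (Fin.last n).castSucc = 0 :=
  hY.apply_eq_zero_of_sub_ne <| by
    rwa [cartanDiag_castSucc_last hn, cartanDiag_of_mem_definiteIndices hk, zero_sub, neg_neg,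
      ne_comm]

theorem lie_gradingElement_eq_self (hc : c ≠ 0)
    (h : ∀ i j, i ≠ 0 → i ≠ Fin.last (n + 1) → j ≠ 0 → j ≠ Fin.last (n + 1) → Y i j = 0) :
    ⁅gradingElement n, Y⁆ = Y := by
  conv_rhs => rw [← one_smul ℝ Y]
  refine (lie_diagonal_eq_smul_iff _ Y 1).2 fun i j hij => ?_
  by_cases hj0 : j = 0
  · subst hj0
    obtain rfl : i = 0 := by_contra fun hi0 => hij (hY.apply_zero_right hi0)
    exact absurd (hY.apply_self hc 0) hij
  by_cases hil : i = Fin.last (n + 1)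
  · subst hil
    obtain rfl : j = Fin.last (n + 1) := by_contra fun hjl => hij (hY.apply_last hjl)
    exact absurd (hY.apply_self hc _) hij
  have hj0' : j.val ≠ 0 := Fin.val_ne_iff.2 hj0
  by_cases hi0 : i = 0
  · subst hi0
    have hjl : j ≠ Fin.last (n + 1) := by
      rintro rfl
      exact hij (by simpa using hY.apply_sig_self (Fin.last (n + 1)))
    have hjl' : j.val ≠ n + 1 := Fin.val_ne_iff.2 hjl
    simp [hj0', hjl']
  have hi0' : i.val ≠ 0 := Fin.val_ne_iff.2 hi0
  have hil' : i.val ≠ n + 1 := Fin.val_ne_iff.2 hil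
  by_cases hjl : j = Fin.last (n + 1)
  · subst hjl
    simp [hi0', hil']
  exact absurd (h i j hi0 hil hj0 hjl) hij

theorem exists_beta_entry (hn : 2 ≤ n) (hc : c ≠ 0) (hY' : ⁅gradingElement n, Y⁆ ≠ Y) :
    (c = m ∧ ∃ k ∈ definiteIndices n, Y 1 k ≠ 0) ∨
      (c = -m ∧ ∃ k ∈ definiteIndices n, Y k 1 ≠ 0) := by
  obtain ⟨i, j, hi0, hil, hj0, hjl, hij⟩ : ∃ i j, i ≠ 0 ∧ i ≠ Fin.last (n + 1) ∧ j ≠ 0 ∧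
      j ≠ Fin.last (n + 1) ∧ Y i j ≠ 0 := by
    by_contra! h
    exact hY' (hY.lie_gradingElement_eq_self hc h)
  have hw := hY.sub_eq_of_apply_ne_zero hij
  rcases eq_one_or_eq_castSucc_last_or_mem_definiteIndices hi0 hil with rfl | rfl | hi <;>
    rcases eq_one_or_eq_castSucc_last_or_mem_definiteIndices hj0 hjl with rfl | rfl | hj
  · exact absurd (hY.apply_self hc 1) hij
  · exact absurd hY.apply_one_castSucc_last hij
  · left
    refine ⟨?_, j, hj, hij⟩
    simpa [cartanDiag_of_mem_definiteIndices hj] using hw.symm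
  · exact absurd hY.apply_castSucc_last_one hij
  · exact absurd (hY.apply_self hc _) hij
  · right
    refine ⟨?_, j, hj, fun h => hij ?_⟩
    · simpa [cartanDiag_castSucc_last hn, cartanDiag_of_mem_definiteIndices hj] using hw.symm
    · linarith [hY.apply_castSucc_last_add_apply_one hj]
  · right
    refine ⟨?_, i, hi, hij⟩
    simpa [cartanDiag_of_mem_definiteIndices hi] using hw.symm
  · left
    refine ⟨?_, i, hi, fun h => hij ?_⟩
    · simpa [cartanDiag_castSucc_last hn, cartanDiag_of_mem_definiteIndices hi] using hw.symm
    · linarith [hY.apply_one_add_apply_castSucc_last hi]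
  · exact absurd (hY.apply_of_mem_definiteIndices hc hi hj) hij

end

variable {c' : ℝ} {Y Z : Matrix (Fin (n + 2)) (Fin (n + 2)) ℝ}

theorem mul_apply_eq (hn : 2 ≤ n) (hY : IsParabolicEigenvector n l m c Y)
    (hZ : IsParabolicEigenvector n l m c' Z) {i k : Fin (n + 2)} (hi : i ≠ 0)
    (hk : k ≠ Fin.last (n + 1)) :
    (Y * Z) i k = Y i 1 * Z 1 k + Y i (Fin.last n).castSucc * Z (Fin.last n).castSucc k +
      ∑ t ∈ definiteIndices n, Y i t * Z t k := by
  rw [mul_apply, sum_univ_eq_add_sum_definiteIndices hn, hY.apply_zero_right hi,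
    hZ.apply_last hk, zero_mul, mul_zero, zero_add, add_zero]

section Commute

variable (hn : 2 ≤ n) (hm : m ≠ 0) (hY : IsParabolicEigenvector n l m m Y)
  (hZ : IsParabolicEigenvector n l m (-m) Z) (hYZ : Commute Y Z)
include hn hm hY hZ hYZ

theorem sum_mul_eq_zero_of_commute :
    ∑ k ∈ definiteIndices n, Y 1 k * Z k 1 = 0 := by
  have h1l : (1 : Fin (n + 2)) ≠ Fin.last (n + 1) := by
    rw [ne_eq, Fin.ext_iff, Fin.val_one, Fin.val_last]
    omega
  have hZY : ∑ t ∈ definiteIndices n, Z 1 t * Y t 1 = 0 := Finset.sum_eq_zero fun t ht => by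
    rw [hZ.one_apply_eq_zero (neg_ne_self.2 hm) ht, zero_mul]
  have h := congrFun₂ hYZ.eq 1 1
  rw [hY.mul_apply_eq hn hZ one_ne_zero h1l, hZ.mul_apply_eq hn hY one_ne_zero h1l] at h
  simpa [hY.apply_self hm, hY.apply_one_castSucc_last, hZ.apply_one_castSucc_last, hZY] using h

theorem mul_eq_mul_of_commute {j k : Fin (n + 2)} (hj : j ∈ definiteIndices n)
    (hk : k ∈ definiteIndices n) : Y 1 j * Z k 1 = Z j 1 * Y 1 k := by
  have hYZ' : ∑ t ∈ definiteIndices n, Y j t * Z t k = 0 := Finset.sum_eq_zero fun t ht => by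
    rw [hY.apply_of_mem_definiteIndices hm hj ht, zero_mul]
  have hZY : ∑ t ∈ definiteIndices n, Z j t * Y t k = 0 := Finset.sum_eq_zero fun t ht => by
    rw [hZ.apply_of_mem_definiteIndices (neg_ne_zero.2 hm) hj ht, zero_mul]
  have h := congrFun₂ hYZ.eq j k
  rw [hY.mul_apply_eq hn hZ (ne_zero_of_mem_definiteIndices hj) (ne_last_of_mem_definiteIndices hk),
    hZ.mul_apply_eq hn hY (ne_zero_of_mem_definiteIndices hj) (ne_last_of_mem_definiteIndices hk),
    hY.apply_one_eq_zero (self_ne_neg.2 hm) hj,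
    hZ.apply_castSucc_last_eq_zero hn (neg_ne_self.2 hm) hj, hYZ', hZY,
    eq_neg_of_add_eq_zero_right (hY.apply_one_add_apply_castSucc_last hj),
    eq_neg_of_add_eq_zero_left (hZ.apply_castSucc_last_add_apply_one hk)] at h
  linear_combination h

theorem forall_eq_zero_or_forall_eq_zero_of_commute :
    (∀ k ∈ definiteIndices n, Y 1 k = 0) ∨ ∀ k ∈ definiteIndices n, Z k 1 = 0 :=
  Finset.forall_eq_zero_or_forall_eq_zero_of_orthogonal_of_parallel
    (fun _ hj _ hk => mul_eq_mul_of_commute hn hm hY hZ hYZ hj hk)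
    (sum_mul_eq_zero_of_commute hn hm hY hZ hYZ)

end Commute

end IsParabolicEigenvector

end SO2n

/-- In `so(2,n)` with its `B₂` restricted root system: if `H ∈ 𝔞`,
`Y, Z ∈ 𝔭` (the parabolic stabilizing the isotropic line `ℝe₀`) satisfy `[H,Y] = λ₁Y`,
`[H,Z] = λ₂Z` with `λ₁, λ₂` nonzero and distinct, and `[Y,Z] = 0`, then `Y ∈ 𝔭⁺` or
`Z ∈ 𝔭⁺`, where `𝔭⁺ = 𝔤_{α-β} ⊕ 𝔤_α ⊕ 𝔤_{α+β}` is the nilradical of `𝔭`, i.e. the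
degree-one space `{W : [A_α, W] = W}` of the grading. -/
theorem parabolic_eigenvectors_in_nilradical (n : ℕ) (hn : 3 ≤ n)
    (H Y Z : Matrix (Fin (n + 2)) (Fin (n + 2)) ℝ)
    (hH : InSplitCartan n H)
    (hYso : Yᵀ * formMatrix2n n + formMatrix2n n * Y = 0)
    (hZso : Zᵀ * formMatrix2n n + formMatrix2n n * Z = 0)
    (hYpar : ∃ c : ℝ, Y.mulVec (Pi.single 0 1 : Fin (n + 2) → ℝ) = c • (Pi.single 0 1 : Fin (n + 2) → ℝ))
    (hZpar : ∃ c : ℝ, Z.mulVec (Pi.single 0 1 : Fin (n + 2) → ℝ) = c • (Pi.single 0 1 : Fin (n + 2) → ℝ))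
    (l₁ l₂ : ℝ) (hl₁ : l₁ ≠ 0) (hl₂ : l₂ ≠ 0) (hne : l₁ ≠ l₂)
    (hHY : ⁅H, Y⁆ = l₁ • Y) (hHZ : ⁅H, Z⁆ = l₂ • Z) (hYZ : ⁅Y, Z⁆ = 0) :
    ⁅gradingElement n, Y⁆ = Y ∨ ⁅gradingElement n, Z⁆ = Z := by
  obtain ⟨l, m, rfl⟩ := SO2n.inSplitCartan_iff.1 hH
  have hY : SO2n.IsParabolicEigenvector n l m l₁ Y := ⟨hYso, hYpar, hHY⟩
  have hZ : SO2n.IsParabolicEigenvector n l m l₂ Z := ⟨hZso, hZpar, hHZ⟩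
  have hcomm : Commute Y Z := commute_iff_lie_eq.2 hYZ
  have hn2 : 2 ≤ n := by omega
  by_contra! hnot
  rcases hY.exists_beta_entry hn2 hl₁ hnot.1 with ⟨h₁, j, hj, hYj⟩ | ⟨h₁, j, hj, hYj⟩ <;>
    rcases hZ.exists_beta_entry hn2 hl₂ hnot.2 with ⟨h₂, k, hk, hZk⟩ | ⟨h₂, k, hk, hZk⟩
  · exact hne (h₁.trans h₂.symm)
  · subst h₁ h₂
    rcases hY.forall_eq_zero_or_forall_eq_zero_of_commute hn2 hl₁ hZ hcomm with h | h
    exacts [hYj (h j hj), hZk (h k hk)]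
  · subst h₂ h₁
    rcases hZ.forall_eq_zero_or_forall_eq_zero_of_commute hn2 hl₂ hY hcomm.symm with h | h
    exacts [hZk (h k hk), hYj (h j hj)]
  · exact hne (h₁.trans h₂.symm)
end

section
/- The centralizer of the restricted root-space 𝔤_β in O(1,n-1) (n ≥ 4) is Z(O(1,n-1)) · exp(𝔤_β) = {±Id} × exp(𝔤_β). -/
open Matrix

/-- The matrix of the quadratic form `2 u₀ u_{m+1} + u₁² + ⋯ + u_m²` of Lorentzian signature
`(1, m+1)` on `ℝ^{m+2}`; for `n = m + 2` this realizes `O(1, n-1)` acting on `ℝ^{1,n-2}`'s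
conformal boundary data. -/
noncomputable def nullFormMatrix (m : ℕ) : Matrix (Fin (m + 2)) (Fin (m + 2)) ℝ :=
  Matrix.of fun i j =>
    if (i = 0 ∧ j = Fin.last (m + 1)) ∨ (i = Fin.last (m + 1) ∧ j = 0) then 1
    else if i = j ∧ i ≠ 0 ∧ i ≠ Fin.last (m + 1) then 1 else 0

/-- The element of the restricted root space `𝔤_β ≅ ℝ^m` (the horospherical algebra at the
isotropic line `[e₀]`) determined by a vector `v` supported on the middle coordinates. -/
noncomputable def rootSpaceMat (m : ℕ) (v : Fin (m + 2) → ℝ) :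
    Matrix (Fin (m + 2)) (Fin (m + 2)) ℝ :=
  Matrix.of fun i j => (if i = 0 then v j else 0) - (if j = Fin.last (m + 1) then v i else 0)

/-- Rank-one "corner" matrix `c · E_{0, last}`. -/
noncomputable def cornerMat (m : ℕ) (c : ℝ) : Matrix (Fin (m+2)) (Fin (m+2)) ℝ :=
  Matrix.of fun i j => if i = 0 ∧ j = Fin.last (m+1) then c else 0

lemma mul_root_apply (m : ℕ) (M : Matrix (Fin (m+2)) (Fin (m+2)) ℝ) (v : Fin (m+2) → ℝ)
    (i j : Fin (m+2)) :
    (M * rootSpaceMat m v) i j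
      = M i 0 * v j - (if j = Fin.last (m+1) then ∑ k, M i k * v k else 0) := by
  rw [Matrix.mul_apply]
  simp only [rootSpaceMat, Matrix.of_apply, mul_sub, Finset.sum_sub_distrib, mul_ite, mul_zero]
  congr 1
  · rw [Finset.sum_eq_single 0 (by intro b _ hb; simp [hb]) (by simp)]; simp
  · by_cases hj : j = Fin.last (m+1) <;> simp [hj]

lemma root_mul_apply (m : ℕ) (M : Matrix (Fin (m+2)) (Fin (m+2)) ℝ) (v : Fin (m+2) → ℝ)
    (i j : Fin (m+2)) :
    (rootSpaceMat m v * M) i j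
      = (if i = 0 then ∑ k, v k * M k j else 0) - v i * M (Fin.last (m+1)) j := by
  rw [Matrix.mul_apply]
  simp only [rootSpaceMat, Matrix.of_apply, sub_mul, Finset.sum_sub_distrib, ite_mul, zero_mul]
  congr 1
  · by_cases hi : i = 0 <;> simp [hi]
  · rw [Finset.sum_eq_single (Fin.last (m+1)) (by intro b _ hb; simp [hb]) (by simp)]; simp

lemma root_mul_root (m : ℕ) (u v : Fin (m+2) → ℝ) (hu0 : u 0 = 0)
    (hul : u (Fin.last (m+1)) = 0) (hv0 : v 0 = 0) (hvl : v (Fin.last (m+1)) = 0) :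
    rootSpaceMat m u * rootSpaceMat m v = cornerMat m (-(∑ k, u k * v k)) := by
  have h0l : (0 : Fin (m+2)) ≠ Fin.last (m+1) := by simp [Fin.ext_iff]
  refine Matrix.ext fun i j => ?_
  rw [Matrix.mul_apply]
  have key : ∀ k : Fin (m+2),
      ((if i = 0 then u k else 0) - (if k = Fin.last (m+1) then u i else 0)) *
        ((if k = 0 then v j else 0) - (if j = Fin.last (m+1) then v k else 0)) =
      (if i = 0 then u k else 0) * (if k = 0 then v j else 0)
      - (if i = 0 then u k else 0) * (if j = Fin.last (m+1) then v k else 0)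
      - (if k = Fin.last (m+1) then u i else 0) * (if k = 0 then v j else 0)
      + (if k = Fin.last (m+1) then u i else 0) * (if j = Fin.last (m+1) then v k else 0) := by
    intro k; ring
  simp only [rootSpaceMat, Matrix.of_apply, key, Finset.sum_add_distrib, Finset.sum_sub_distrib]
  have hA : ∑ k : Fin (m+2), (if i = 0 then u k else 0) * (if k = 0 then v j else 0) = 0 := by
    rw [Finset.sum_eq_single 0 (by intro b _ hb; simp [hb]) (by simp)]
    by_cases hi : i = 0 <;> simp [hi, hu0]
  have hC : ∑ k : Fin (m+2), (if k = Fin.last (m+1) then u i else 0) * (if k = 0 then v j else 0)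
      = 0 := by
    rw [Finset.sum_eq_single 0 (by intro b _ hb; simp [hb]) (by simp)]
    simp [Ne.symm h0l]
  have hD : ∑ k : Fin (m+2),
      (if k = Fin.last (m+1) then u i else 0) * (if j = Fin.last (m+1) then v k else 0) = 0 := by
    rw [Finset.sum_eq_single (Fin.last (m+1)) (by intro b _ hb; simp [hb]) (by simp)]
    by_cases hj : j = Fin.last (m+1) <;> simp [hj, hvl]
  have hB : ∑ k : Fin (m+2), (if i = 0 then u k else 0) * (if j = Fin.last (m+1) then v k else 0)
      = if i = 0 ∧ j = Fin.last (m+1) then (∑ k, u k * v k) else 0 := by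
    by_cases hi : i = 0 <;> by_cases hj : j = Fin.last (m+1) <;> simp [hi, hj]
  rw [hA, hB, hC, hD]
  by_cases hi : i = 0 <;> by_cases hj : j = Fin.last (m+1) <;> simp [hi, hj, cornerMat]

lemma corner_mul_root (m : ℕ) (c : ℝ) (v : Fin (m+2) → ℝ) (hv0 : v 0 = 0)
    (hvl : v (Fin.last (m+1)) = 0) :
    cornerMat m c * rootSpaceMat m v = 0 ∧ rootSpaceMat m v * cornerMat m c = 0 := by
  have h0l : (0 : Fin (m+2)) ≠ Fin.last (m+1) := by simp [Fin.ext_iff]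
  constructor
  · refine Matrix.ext fun i j => ?_
    rw [Matrix.zero_apply, mul_root_apply]
    by_cases hj : j = Fin.last (m+1) <;> by_cases hi : i = 0 <;>
      simp [hi, hj, h0l, Ne.symm h0l, hvl, cornerMat]
  · refine Matrix.ext fun i j => ?_
    rw [Matrix.zero_apply, root_mul_apply]
    by_cases hj : j = Fin.last (m+1) <;> by_cases hi : i = 0 <;>
      simp [hi, hj, h0l, Ne.symm h0l, hv0, hvl, cornerMat]

lemma Jrow (m : ℕ) (x : Fin (m+2)) (f : Fin (m+2) → ℝ) :
    ∑ y, nullFormMatrix m x y * f y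
      = (if x = 0 then f (Fin.last (m+1)) else 0) + (if x = Fin.last (m+1) then f 0 else 0)
        + (if x ≠ 0 ∧ x ≠ Fin.last (m+1) then f x else 0) := by
  have h0l : (0 : Fin (m+2)) ≠ Fin.last (m+1) := by simp [Fin.ext_iff]
  have hJ : ∀ y, nullFormMatrix m x y * f y
      = (if x = 0 then (if y = Fin.last (m+1) then f y else 0) else 0)
        + (if x = Fin.last (m+1) then (if y = 0 then f y else 0) else 0)
        + (if x ≠ 0 ∧ x ≠ Fin.last (m+1) then (if y = x then f y else 0) else 0) := by
    intro y
    by_cases hx0 : x = 0 <;> by_cases hxl : x = Fin.last (m+1) <;>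
      by_cases hyl : y = Fin.last (m+1) <;> by_cases hy0 : y = 0 <;>
      by_cases hyx : y = x <;>
      simp_all [nullFormMatrix, h0l, Ne.symm h0l, eq_comm]
  simp only [hJ, Finset.sum_add_distrib]
  congr 1
  · congr 1
    · by_cases hx0 : x = 0 <;> simp [hx0]
    · by_cases hxl : x = Fin.last (m+1) <;> simp [hxl]
  · by_cases hx : x ≠ 0 ∧ x ≠ Fin.last (m+1) <;> simp [hx]

lemma form_entry (m : ℕ) (g : Matrix (Fin (m+2)) (Fin (m+2)) ℝ)
    (hg : gᵀ * nullFormMatrix m * g = nullFormMatrix m) (p q : Fin (m+2)) :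
    g 0 p * g (Fin.last (m+1)) q + g (Fin.last (m+1)) p * g 0 q
      + (∑ x, if x ≠ 0 ∧ x ≠ Fin.last (m+1) then g x p * g x q else 0)
      = nullFormMatrix m p q := by
  have h2 : gᵀ * (nullFormMatrix m * g) = nullFormMatrix m := by
    rw [← Matrix.mul_assoc]; exact hg
  have hpq : (gᵀ * (nullFormMatrix m * g)) p q = nullFormMatrix m p q :=
    congrArg (fun M : Matrix (Fin (m+2)) (Fin (m+2)) ℝ => M p q) h2
  rw [Matrix.mul_apply] at hpq
  have hJg : ∀ x, (nullFormMatrix m * g) x q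
      = (if x = 0 then g (Fin.last (m+1)) q else 0) + (if x = Fin.last (m+1) then g 0 q else 0)
        + (if x ≠ 0 ∧ x ≠ Fin.last (m+1) then g x q else 0) := by
    intro x; rw [Matrix.mul_apply]; exact Jrow m x fun y => g y q
  simp only [hJg, Matrix.transpose_apply, mul_add, Finset.sum_add_distrib, mul_ite, mul_zero] at hpq
  rw [Finset.sum_eq_single 0 (by intro b _ hb; simp [hb]) (by simp),
    Finset.sum_eq_single (Fin.last (m+1)) (by intro b _ hb; simp [hb]) (by simp)] at hpq
  simp only [if_pos rfl] at hpq
  exact hpq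

/-- For `n = m + 2 ≥ 4`, the centralizer of the restricted root space
`𝔤_β` in `O(1, n-1)` is `Z(O(1, n-1)) · exp(𝔤_β) = {±Id} × exp(𝔤_β)`.  Here, since elements
`N` of `𝔤_β` satisfy `N³ = 0`, we have `exp(N) = 1 + N + ½N²`. -/
theorem centralizer_of_root_space (m : ℕ) (hm : 2 ≤ m)
    (g : Matrix (Fin (m + 2)) (Fin (m + 2)) ℝ)
    (hg : gᵀ * nullFormMatrix m * g = nullFormMatrix m) :
    (∀ v : Fin (m + 2) → ℝ, v 0 = 0 → v (Fin.last (m + 1)) = 0 →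
        g * rootSpaceMat m v = rootSpaceMat m v * g) ↔
      ∃ ε : ℝ, (ε = 1 ∨ ε = -1) ∧
        ∃ v : Fin (m + 2) → ℝ, v 0 = 0 ∧ v (Fin.last (m + 1)) = 0 ∧
          g = ε • (1 + rootSpaceMat m v + (2⁻¹ : ℝ) • (rootSpaceMat m v * rootSpaceMat m v)) := by
  have h0l : (0 : Fin (m+2)) ≠ Fin.last (m+1) := by simp [Fin.ext_iff]
  constructor
  · intro h
    -- the basic entrywise consequence of commuting with `rootSpaceMat` of a basis vector
    have key : ∀ k : Fin (m+2), k ≠ 0 → k ≠ Fin.last (m+1) → ∀ i j : Fin (m+2),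
        (if j = k then g i 0 else 0) - (if j = Fin.last (m+1) then g i k else 0)
          = (if i = 0 then g k j else 0) - (if i = k then g (Fin.last (m+1)) j else 0) := by
      intro k hk0 hkl i j
      have hc := h (fun j => if j = k then (1:ℝ) else 0)
        (by simp [Ne.symm hk0]) (by simp [Ne.symm hkl])
      have hij := congrArg (fun M : Matrix (Fin (m+2)) (Fin (m+2)) ℝ => M i j) hc
      simp only [mul_root_apply, root_mul_apply] at hij
      rw [Finset.sum_eq_single k (by intro b _ hb; simp [hb]) (by simp),
        Finset.sum_eq_single k (by intro b _ hb; simp [hb]) (by simp)] at hij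
      simpa [mul_ite, ite_mul] using hij
    -- structure facts about `g`
    have pick : ∀ i : Fin (m+2), ∃ k : Fin (m+2), k ≠ 0 ∧ k ≠ Fin.last (m+1) ∧ k ≠ i := by
      intro i
      by_cases hi : i = (⟨1, by omega⟩ : Fin (m+2))
      · refine ⟨⟨2, by omega⟩, ?_, ?_, ?_⟩ <;> simp [Fin.ext_iff, hi, Fin.last] <;> omega
      · refine ⟨⟨1, by omega⟩, ?_, ?_, ?_⟩ <;>
          simp [Fin.ext_iff, Fin.last, Ne.symm] <;> first | omega | (intro h; exact hi (by simp [Fin.ext_iff, h]))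
    obtain ⟨k1, hk10, hk1l, -⟩ := pick 0
    have A1 : ∀ i : Fin (m+2), i ≠ 0 → g i 0 = 0 := by
      intro i hi
      obtain ⟨k, hk0, hkl, hki⟩ := pick i
      have hk := key k hk0 hkl i k
      simpa [hkl, hi, Ne.symm hki] using hk
    have A2 : ∀ k : Fin (m+2), k ≠ 0 → k ≠ Fin.last (m+1) → g k k = g 0 0 := by
      intro k hk0 hkl
      have hk := key k hk0 hkl 0 k
      simpa [hkl, Ne.symm hk0] using hk.symm
    have A3 : ∀ k i : Fin (m+2), k ≠ 0 → k ≠ Fin.last (m+1) → i ≠ 0 → i ≠ k → g i k = 0 := by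
      intro k i hk0 hkl hi0 hik
      have hk := key k hk0 hkl i (Fin.last (m+1))
      simpa [Ne.symm hkl, hi0, hik] using hk
    have A4 : ∀ k : Fin (m+2), k ≠ 0 → k ≠ Fin.last (m+1) → g k (Fin.last (m+1)) = -(g 0 k) := by
      intro k hk0 hkl
      have hk := key k hk0 hkl 0 (Fin.last (m+1))
      simp [Ne.symm hkl, Ne.symm hk0] at hk
      linarith
    have A5 : g (Fin.last (m+1)) (Fin.last (m+1)) = g 0 0 := by
      have hk := key k1 hk10 hk1l k1 (Fin.last (m+1))
      simp [Ne.symm hk1l, hk10] at hk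
      rw [← A2 k1 hk10 hk1l]
      linarith
    have A6 : ∀ j : Fin (m+2), j ≠ Fin.last (m+1) → g (Fin.last (m+1)) j = 0 := by
      intro j hj
      obtain ⟨k, hk0, hkl, hkj⟩ := pick j
      have hk := key k hk0 hkl k j
      simp [Ne.symm hkj, hj, hk0, Ne.symm hkl] at hk
      linarith
    set w : Fin (m+2) → ℝ := fun x => if x = 0 ∨ x = Fin.last (m+1) then 0 else g 0 x with hw
    have hw0 : w 0 = 0 := by simp [hw]
    have hwl : w (Fin.last (m+1)) = 0 := by simp [hw]
    have hwmid : ∀ x : Fin (m+2), x ≠ 0 → x ≠ Fin.last (m+1) → w x = g 0 x := by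
      intro x hx0 hxl; simp [hw, hx0, hxl]
    have Gstruct : ∀ i j : Fin (m+2), g i j
        = (if i = j then g 0 0 else 0) + (if i = 0 then w j else 0)
          - (if j = Fin.last (m+1) then w i else 0)
          + (if i = 0 ∧ j = Fin.last (m+1) then g 0 (Fin.last (m+1)) else 0) := by
      intro i j
      by_cases hi0 : i = 0
      · subst hi0
        by_cases hjl : j = Fin.last (m+1)
        · subst hjl
          simp [h0l, hw0, hwl]
        · by_cases hj0 : j = 0
          · subst hj0; simp [h0l, hw0]
          · simp [hjl, Ne.symm hj0, hwmid j hj0 hjl, h0l]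
      · by_cases hil : i = Fin.last (m+1)
        · subst hil
          by_cases hjl : j = Fin.last (m+1)
          · subst hjl; simp [Ne.symm h0l, A5, hwl]
          · have : ¬ (Fin.last (m+1) = j) := fun hh => hjl hh.symm
            simp [hjl, this, Ne.symm h0l, A6 j hjl]
        · by_cases hjl : j = Fin.last (m+1)
          · subst hjl
            simp [hi0, hil, A4 i hi0 hil, hwmid i hi0 hil]
          · by_cases hij : i = j
            · subst hij
              simp [hi0, hjl, A2 i hi0 hil]
            · by_cases hj0 : j = 0
              · subst hj0
                simp [hi0, hij, h0l, A1 i hi0]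
              · simp [hi0, hij, hjl, A3 j i hj0 hjl hi0 hij]
    -- consequences of the orthogonality relation
    have hlk1 : g (Fin.last (m+1)) k1 = 0 :=
      A3 k1 (Fin.last (m+1)) hk10 hk1l (Ne.symm h0l) (Ne.symm hk1l)
    have e1 : g 0 0 * g 0 0 = 1 := by
      have e1 := form_entry m g hg k1 k1
      rw [Finset.sum_eq_single k1 ?side (by simp)] at e1
      case side =>
        intro b _ hb
        by_cases hb0 : b = 0
        · simp [hb0]
        · by_cases hbl : b = Fin.last (m+1)
          · simp [hbl]
          · simp [hb0, hbl, A3 k1 b hk10 hk1l hb0 hb]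
      simpa [hlk1, hk10, hk1l, A2 k1 hk10 hk1l, nullFormMatrix] using e1
    have e2 : g 0 (Fin.last (m+1)) * g 0 0 + g 0 0 * g 0 (Fin.last (m+1))
        + (∑ x, w x * w x) = 0 := by
      have e2 := form_entry m g hg (Fin.last (m+1)) (Fin.last (m+1))
      have hsum : (∑ x, if x ≠ 0 ∧ x ≠ Fin.last (m+1)
            then g x (Fin.last (m+1)) * g x (Fin.last (m+1)) else 0)
          = ∑ x, w x * w x := by
        apply Finset.sum_congr rfl
        intro x _
        by_cases hx0 : x = 0
        · simp [hx0, hw0]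
        · by_cases hxl : x = Fin.last (m+1)
          · simp [hxl, hwl]
          · rw [if_pos ⟨hx0, hxl⟩, A4 x hx0 hxl, hwmid x hx0 hxl]; ring
      rw [hsum, A5] at e2
      simpa [nullFormMatrix, Ne.symm h0l, h0l] using e2
    refine ⟨g 0 0, mul_self_eq_one_iff.mp e1, fun x => g 0 0 * w x,
      by simp [hw0], by simp [hwl], ?_⟩
    rw [root_mul_root m _ _ (by simp [hw0]) (by simp [hwl]) (by simp [hw0]) (by simp [hwl])]
    have hvv : (∑ k, (g 0 0 * w k) * (g 0 0 * w k)) = ∑ k, w k * w k :=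
      Finset.sum_congr rfl fun k _ => by rw [mul_mul_mul_comm, e1, one_mul]
    refine Matrix.ext fun i j => ?_
    simp only [Matrix.smul_apply, Matrix.add_apply, Matrix.one_apply, rootSpaceMat, cornerMat,
      Matrix.of_apply, smul_eq_mul, hvv]
    rw [Gstruct i j]
    by_cases hij : i = j
    · subst hij
      by_cases hi0 : i = 0
      · subst hi0
        simp [h0l, hw0]
      · by_cases hil : i = Fin.last (m+1)
        · subst hil
          simp [Ne.symm h0l, hwl, hvv]
        · simp [hi0, hil]
    · by_cases hi0 : i = 0
      · subst hi0
        by_cases hjl : j = Fin.last (m+1)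
        · subst hjl
          simp [hij, hw0, hwl, hvv]
          linear_combination ((2⁻¹ : ℝ) * g 0 0) * e2 - g 0 (Fin.last (m+1)) * e1
        · simp [hij, hjl, hw0]
          linear_combination (-(w j)) * e1
      · by_cases hjl : j = Fin.last (m+1)
        · subst hjl
          simp [hij, hi0, hwl]
          linear_combination (-(w i)) * e1
        · simp [hij, hi0, hjl]
  · rintro ⟨ε, hε, u, hu0, hul, rfl⟩
    intro v hv0 hvl
    have hcomm : rootSpaceMat m u * rootSpaceMat m v = rootSpaceMat m v * rootSpaceMat m u := by
      rw [root_mul_root m u v hu0 hul hv0 hvl, root_mul_root m v u hv0 hvl hu0 hul]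
      congr 1
      simp [mul_comm]
    have hc1 := (corner_mul_root m (-(∑ k, u k * u k)) v hv0 hvl).1
    have hc2 := (corner_mul_root m (-(∑ k, u k * u k)) v hv0 hvl).2
    rw [Matrix.smul_mul, Matrix.mul_smul]
    congr 1
    rw [add_mul, add_mul, mul_add, mul_add, one_mul, mul_one, Matrix.smul_mul, Matrix.mul_smul,
      root_mul_root m u u hu0 hul hu0 hul, hc1, hc2, hcomm]
end
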